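/- For every integer n ≥ 0 there exist constants C_n, D_n (independent of σ₀, σ₁) such that for all σ₀, σ₁ ∈ {-1,1}^k: ∑_{σ ∈ {-1,1}^k} (σ·σ₀)² (σ·σ₁)^{2n} = C_n (σ₀·σ₁)² + D_n. -/

import Mathlib

/-!
Flipping the summation variable by `σ₁` (the gauge `σ ↦ σ ⊙ σ₁`) turns `σ·σ₁` into the total
spin `S(ρ) = ∑ᵢ ρᵢ` and `σ·σ₀` into `ρ·ε` with `ε = σ₀ ⊙ σ₁`. Expanding the square gives
`∑ᵢⱼ εᵢ εⱼ Mᵢⱼ`, where `Mᵢⱼ = ∑_ρ ρᵢ ρⱼ S(ρ)^m` is invariant under permuting coordinates, hence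
equal to a constant `a` on the diagonal and a constant `b` off it. Since `εᵢ² = 1`, the sum is
`b (∑ᵢ εᵢ)² + k (a - b)`, and `∑ᵢ εᵢ = σ₀·σ₁`.
-/

open Finset Real

/-- The real sign of a Boolean spin: `true ↦ 1`, `false ↦ -1`. -/
noncomputable def sgn (b : Bool) : ℝ := if b then 1 else -1

/-- Standard inner product of two spin vectors in `{-1,1}^k`. -/
noncomputable def sdot {k : ℕ} (σ τ : Fin k → Bool) : ℝ := ∑ i, sgn (σ i) * sgn (τ i)

theorem exists_eq_ite_of_perm_invariant {ι R : Type*} [DecidableEq ι] [Nonempty R]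
    (M : ι → ι → R) (hM : ∀ (e : Equiv.Perm ι) (i j : ι), M (e i) (e j) = M i j) :
    ∃ a b : R, ∀ i j, M i j = if i = j then a else b := by
  obtain ⟨r⟩ := ‹Nonempty R›
  obtain ⟨a, ha⟩ : ∃ a, ∀ i, M i i = a := by
    rcases isEmpty_or_nonempty ι with hι | ⟨⟨i₀⟩⟩
    · exact ⟨r, fun i => isEmptyElim i⟩
    · exact ⟨M i₀ i₀, fun i => by simpa using hM (Equiv.swap i₀ i) i₀ i₀⟩
  obtain ⟨b, hb⟩ : ∃ b, ∀ i j, i ≠ j → M i j = b := by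
    by_cases h : ∃ i₀ j₀ : ι, i₀ ≠ j₀
    · obtain ⟨i₀, j₀, h₀⟩ := h
      refine ⟨M i₀ j₀, fun i j hij => ?_⟩
      obtain ⟨e, hi, hj⟩ := MulAction.is_two_pretransitive_iff.mp
        (Equiv.Perm.isMultiplyPretransitive ι 2) h₀ hij
      rw [← hi, ← hj, Equiv.Perm.smul_def, Equiv.Perm.smul_def, hM]
    · push Not at h
      exact ⟨r, fun i j hij => absurd (h i j) hij⟩
  refine ⟨a, b, fun i j => ?_⟩
  split_ifs with hij
  · rw [hij, ha]
  · exact hb i j hij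

theorem sum_sum_mul_ite_of_mul_self_eq_one {ι R : Type*} [Fintype ι] [DecidableEq ι]
    [CommRing R] (ε : ι → R) (hε : ∀ i, ε i * ε i = 1) (a b : R) :
    ∑ i, ∑ j, ε i * ε j * (if i = j then a else b) =
      b * (∑ i, ε i) ^ 2 + Fintype.card ι * (a - b) := by
  have hsplit (i j : ι) : ε i * ε j * (if i = j then a else b) =
      b * (ε i * ε j) + if i = j then a - b else 0 := by
    split_ifs with hij
    · rw [hij, hε]; ring
    · ring
  simp only [hsplit, sum_add_distrib, ← mul_sum, sq, sum_mul_sum, sum_ite_eq, mem_univ, if_true,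
    sum_const, card_univ, nsmul_eq_mul]

theorem sgn_mul_self (b : Bool) : sgn b * sgn b = 1 := by
  cases b <;> simp [sgn]

theorem sgn_beq (a b : Bool) : sgn (a == b) = sgn a * sgn b := by
  cases a <;> cases b <;> simp [sgn]

theorem sgn_true : sgn true = 1 := rfl

noncomputable def spinMoment {ι : Type*} [Fintype ι] [DecidableEq ι] (m : ℕ) (i j : ι) : ℝ :=
  ∑ ρ : ι → Bool, sgn (ρ i) * sgn (ρ j) * (∑ l, sgn (ρ l)) ^ m

theorem spinMoment_perm {ι : Type*} [Fintype ι] [DecidableEq ι] (m : ℕ) (e : Equiv.Perm ι)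
    (i j : ι) : spinMoment m (e i) (e j) = spinMoment m i j := by
  refine Fintype.sum_equiv (e.arrowCongr (Equiv.refl Bool)).symm _ _ fun ρ => ?_
  simp only [Equiv.arrowCongr_symm, Equiv.arrowCongr_apply, Equiv.symm_symm, Equiv.refl_symm,
    Equiv.coe_refl, Function.comp_apply, id, Equiv.sum_comp e (fun l => sgn (ρ l))]

section SpinVectors

variable {k : ℕ}

theorem sdot_beq (ρ τ υ : Fin k → Bool) :
    sdot (fun i => ρ i == υ i) τ = sdot ρ (fun i => τ i == υ i) := by
  simp only [sdot, sgn_beq]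
  exact sum_congr rfl fun i _ => by ring

theorem sdot_const_true (ρ : Fin k → Bool) : sdot ρ (fun _ => true) = ∑ i, sgn (ρ i) := by
  simp only [sdot, sgn_true, mul_one]

theorem sum_sdot_sq_mul_sdot_pow_gauge (σ₀ σ₁ : Fin k → Bool) (m : ℕ) :
    ∑ σ, sdot σ σ₀ ^ 2 * sdot σ σ₁ ^ m =
      ∑ ρ, sdot ρ (fun i => σ₀ i == σ₁ i) ^ 2 * sdot ρ (fun _ => true) ^ m := by
  have hinv : Function.Involutive fun (ρ : Fin k → Bool) i => ρ i == σ₁ i := fun ρ => by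
    funext i; dsimp only; cases ρ i <;> cases σ₁ i <;> rfl
  rw [← Equiv.sum_comp (hinv.toPerm _)]
  refine sum_congr rfl fun ρ _ => ?_
  simp only [Function.Involutive.coe_toPerm, sdot_beq, beq_self_eq_true]

theorem sum_sdot_sq_mul_sdot_true_pow (ε : Fin k → Bool) (m : ℕ) :
    ∑ ρ, sdot ρ ε ^ 2 * sdot ρ (fun _ => true) ^ m =
      ∑ i, ∑ j, sgn (ε i) * sgn (ε j) * spinMoment m i j := by
  have hexpand (ρ : Fin k → Bool) : sdot ρ ε ^ 2 * sdot ρ (fun _ => true) ^ m =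
      ∑ i, ∑ j, sgn (ε i) * sgn (ε j) * (sgn (ρ i) * sgn (ρ j) * (∑ l, sgn (ρ l)) ^ m) := by
    rw [sdot_const_true, sdot, sq, sum_mul_sum, sum_mul]
    refine sum_congr rfl fun i _ => ?_
    rw [sum_mul]
    exact sum_congr rfl fun j _ => by ring
  simp only [hexpand, spinMoment, mul_sum]
  rw [sum_comm]
  exact sum_congr rfl fun i _ => sum_comm

end SpinVectors

theorem stmt16_general (k : ℕ) (n : ℕ) :
    ∃ C D : ℝ, ∀ σ₀ σ₁ : Fin k → Bool,
      ∑ σ : Fin k → Bool, (sdot σ σ₀) ^ 2 * (sdot σ σ₁) ^ (2 * n) =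
        C * (sdot σ₀ σ₁) ^ 2 + D := by
  obtain ⟨a, b, hab⟩ := exists_eq_ite_of_perm_invariant _ (spinMoment_perm (ι := Fin k) (2 * n))
  refine ⟨b, k * (a - b), fun σ₀ σ₁ => ?_⟩
  have hdot : sdot σ₀ σ₁ = ∑ i, sgn (σ₀ i == σ₁ i) := by simp only [sdot, sgn_beq]
  rw [sum_sdot_sq_mul_sdot_pow_gauge, sum_sdot_sq_mul_sdot_true_pow, hdot]
  simpa only [hab, Fintype.card_fin] using
    sum_sum_mul_ite_of_mul_self_eq_one (fun i => sgn (σ₀ i == σ₁ i)) (fun i => sgn_mul_self _) a b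

theorem stmt16 (k : ℕ) (hk : 2 ≤ k) (n : ℕ) :
    ∃ C D : ℝ, ∀ σ₀ σ₁ : Fin k → Bool,
      ∑ σ : Fin k → Bool, (sdot σ σ₀) ^ 2 * (sdot σ σ₁) ^ (2 * n) =
        C * (sdot σ₀ σ₁) ^ 2 + D :=
  stmt16_general k n
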